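/- arXiv:2206.05023 — 4 statements merged into one kernel-verified Lean document; each statement's English description precedes it below -/
import Mathlib

section
/- Let f be an arithmetic function with ∑_{n ≤ x} f(n) = O(x^ξ) for some real ξ > 0, and let k be a nonnegative integer with k = ξ. Then ∑_{n ≤ x} f(n)⌊x/n⌋^k = O(x^{k + 1/2}). -/
/-!
Write `F(y) = ∑_{n ≤ y} f(n)`. Expanding `⌊x/n⌋^k = ∑_{m ≤ x/n} (m^k - (m-1)^k)` and interchanging
the sums over the hyperbola `mn ≤ x` gives `∑_{m ≤ x} (m^k - (m-1)^k) F(x/m)`. Since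
`m^k - (m-1)^k ≤ k m^(k-1)` and `|F(y)| ≤ C y^k`, the `m`-th term is at most `C k x^k / m`, and the
harmonic sum is at most `1 + log x ≤ 2 √x`.
-/

open Finset Filter Asymptotics

theorem sum_Icc_one_sub_pred (g : ℕ → ℝ) (M : ℕ) :
    ∑ m ∈ Icc 1 M, (g m - g (m - 1)) = g M - g 0 := by
  induction M with
  | zero => simp
  | succ M ih => rw [sum_Icc_succ_top (by omega), ih, Nat.add_sub_cancel]; ring

theorem sum_mul_apply_div_eq (f g : ℕ → ℝ) (hg : g 0 = 0) (N : ℕ) :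
    ∑ n ∈ Icc 1 N, f n * g (N / n) =
      ∑ m ∈ Icc 1 N, (g m - g (m - 1)) * ∑ n ∈ Icc 1 (N / m), f n := by
  have hhyperbola :
      ∀ n m, n ∈ Icc 1 N ∧ m ∈ Icc 1 (N / n) ↔ n ∈ Icc 1 (N / m) ∧ m ∈ Icc 1 N := by
    intro n m
    simp only [mem_Icc]
    constructor
    · rintro ⟨⟨hn, -⟩, hm, hmN⟩
      rw [Nat.le_div_iff_mul_le hn] at hmN
      exact ⟨⟨hn, (Nat.le_div_iff_mul_le hm).2 (by linarith)⟩, hm, by nlinarith⟩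
    · rintro ⟨⟨hn, hnN⟩, hm, -⟩
      rw [Nat.le_div_iff_mul_le hm] at hnN
      exact ⟨⟨hn, by nlinarith⟩, hm, (Nat.le_div_iff_mul_le hn).2 (by linarith)⟩
  calc ∑ n ∈ Icc 1 N, f n * g (N / n)
      = ∑ n ∈ Icc 1 N, ∑ m ∈ Icc 1 (N / n), f n * (g m - g (m - 1)) := by
        simp_rw [← mul_sum, sum_Icc_one_sub_pred, hg, sub_zero]
    _ = ∑ m ∈ Icc 1 N, ∑ n ∈ Icc 1 (N / m), f n * (g m - g (m - 1)) := sum_comm' hhyperbola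
    _ = _ := by simp_rw [mul_sum, mul_comm]

theorem abs_pow_sub_pow_sub_one_le {a : ℝ} (ha : 1 ≤ a) (k : ℕ) :
    |a ^ k - (a - 1) ^ k| ≤ k * a ^ (k - 1) := by
  have h := abs_pow_sub_pow_le a (a - 1) k
  rwa [sub_sub_cancel, abs_one, one_mul, abs_of_nonneg (by linarith : (0 : ℝ) ≤ a),
    abs_of_nonneg (by linarith : (0 : ℝ) ≤ a - 1), max_eq_left (by linarith)] at h

theorem sum_Icc_inv_le_two_mul_sqrt (N : ℕ) : ∑ m ∈ Icc 1 N, (1 : ℝ) / m ≤ 2 * √N := by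
  rcases Nat.eq_zero_or_pos N with rfl | hN
  · simp
  have hlog : Real.log N ≤ 2 * (√N - 1) := by
    have := Real.log_le_sub_one_of_pos (x := √N) (by positivity)
    rw [Real.log_sqrt (Nat.cast_nonneg N)] at this
    linarith
  have := harmonic_le_one_add_log N
  simp only [harmonic_eq_sum_Icc, Rat.cast_sum, Rat.cast_inv, Rat.cast_natCast] at this
  simp only [one_div]
  linarith

theorem exists_forall_abs_sum_Icc_le {f : ℕ → ℝ} {ξ : ℝ}
    (hf : (fun x : ℝ => ∑ n ∈ Icc 1 ⌊x⌋₊, f n) =O[atTop] fun x : ℝ => x ^ ξ) :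
    ∃ C, 0 ≤ C ∧ ∀ N : ℕ, |∑ n ∈ Icc 1 N, f n| ≤ C * (N : ℝ) ^ ξ := by
  have hnat := hf.comp_tendsto tendsto_natCast_atTop_atTop
  simp only [Function.comp_def, Nat.floor_natCast] at hnat
  have hzero (N : ℕ) (hN : (N : ℝ) ^ ξ = 0) : ∑ n ∈ Icc 1 N, f n = 0 := by
    obtain ⟨hN0, -⟩ := (Real.rpow_eq_zero_iff_of_nonneg (Nat.cast_nonneg N)).1 hN
    simp [Nat.cast_eq_zero.1 hN0]
  obtain ⟨C, hC⟩ := (isBigO_nat_atTop_iff hzero).1 hnat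
  have hC' (N : ℕ) : |∑ n ∈ Icc 1 N, f n| ≤ C * (N : ℝ) ^ ξ := by
    simpa [abs_of_nonneg (Real.rpow_nonneg (Nat.cast_nonneg N) ξ)] using hC N
  exact ⟨C, by simpa using (abs_nonneg _).trans (hC' 1), hC'⟩

theorem abs_sum_mul_div_pow_le {f : ℕ → ℝ} {C : ℝ} {k : ℕ} (hk : k ≠ 0) (hC : 0 ≤ C)
    (hF : ∀ N : ℕ, |∑ n ∈ Icc 1 N, f n| ≤ C * (N : ℝ) ^ k) (N : ℕ) :
    |∑ n ∈ Icc 1 N, f n * ((N / n : ℕ) : ℝ) ^ k| ≤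
      C * k * N ^ k * ∑ m ∈ Icc 1 N, (1 : ℝ) / m := by
  have hterm : ∀ m ∈ Icc 1 N, |((m : ℝ) ^ k - ((m - 1 : ℕ) : ℝ) ^ k) *
      ∑ n ∈ Icc 1 (N / m), f n| ≤ C * k * N ^ k * (1 / m) := by
    intro m hm
    have hm1 : (1 : ℝ) ≤ m := by exact_mod_cast (mem_Icc.1 hm).1
    rw [Nat.cast_sub (mem_Icc.1 hm).1, Nat.cast_one, abs_mul]
    calc |(m : ℝ) ^ k - (m - 1) ^ k| * |∑ n ∈ Icc 1 (N / m), f n|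
        ≤ k * m ^ (k - 1) * (C * (N / m) ^ k) := by
          gcongr
          · exact abs_pow_sub_pow_sub_one_le hm1 k
          · exact (hF _).trans (by gcongr; exact Nat.cast_div_le)
      _ = C * k * N ^ k * (1 / m) := by
          rw [div_pow, ← pow_sub_one_mul hk (m : ℝ)]
          field_simp
  calc _ = |∑ m ∈ Icc 1 N, ((m : ℝ) ^ k - ((m - 1 : ℕ) : ℝ) ^ k) *
          ∑ n ∈ Icc 1 (N / m), f n| := by
        rw [sum_mul_apply_div_eq f (fun m => (m : ℝ) ^ k) (by simp [hk])]
    _ ≤ ∑ m ∈ Icc 1 N, C * k * N ^ k * (1 / m) :=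
        (abs_sum_le_sum_abs _ _).trans (sum_le_sum hterm)
    _ = _ := by rw [mul_sum]

theorem bullet_asymp_eq (f : ℕ → ℝ) (ξ : ℝ) (hξ : 0 < ξ) (k : ℕ) (hk : (k : ℝ) = ξ)
    (hf : (fun x : ℝ => ∑ n ∈ Finset.Icc 1 ⌊x⌋₊, f n) =O[atTop] fun x : ℝ => x ^ ξ) :
    (fun x : ℝ => ∑ n ∈ Finset.Icc 1 ⌊x⌋₊, f n * ((⌊x / (n : ℝ)⌋₊ : ℝ)) ^ k)
      =O[atTop] fun x : ℝ => x ^ ((k : ℝ) + 1 / 2) := by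
  have hk0 : k ≠ 0 := by rintro rfl; exact hξ.ne (by exact_mod_cast hk)
  obtain ⟨C, hC0, hC⟩ := exists_forall_abs_sum_Icc_le hf
  simp only [← hk, Real.rpow_natCast] at hC
  refine isBigO_iff.2 ⟨2 * C * k, ?_⟩
  filter_upwards [eventually_ge_atTop 1] with x hx
  have hx0 : 0 ≤ x := by linarith
  have hxN : (⌊x⌋₊ : ℝ) ≤ x := Nat.floor_le hx0
  simp_rw [Nat.floor_div_natCast]
  rw [Real.norm_eq_abs, Real.norm_of_nonneg (by positivity), Real.rpow_add (by linarith),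
    Real.rpow_natCast, ← Real.sqrt_eq_rpow]
  calc _ ≤ C * k * ⌊x⌋₊ ^ k * ∑ m ∈ Icc 1 ⌊x⌋₊, (1 : ℝ) / m :=
        abs_sum_mul_div_pow_le hk0 hC0 hC _
    _ ≤ C * k * x ^ k * (2 * √x) := by
        gcongr
        exact (sum_Icc_inv_le_two_mul_sqrt _).trans (by gcongr)
    _ = 2 * C * k * (x ^ k * √x) := by ring
end

section
/- Let f be an arithmetic function with ∑_{n ≤ x} f(n) = O(x^ξ), and let k ≥ 0 be an integer with k + 1 = ξ. Then ∑_{n ≤ x} f(n)⌊x/n⌋^k = O(x^{k+1} log x). -/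
open Finset Filter Asymptotics

/-!
Write `S(y) = ∑_{n ≤ y} f n`, so that `|S(y)| ≤ C y^(k+1)` for all `y ≥ 1`. Telescoping
`⌊x/n⌋^k = ∑_{j ≤ x/n} (j^k - (j-1)^k)` and swapping the two sums over `n j ≤ x` gives
`∑_{n ≤ x} f n ⌊x/n⌋^k = ∑_{j ≤ x} (j^k - (j-1)^k) S(x/j)`. Since `0 ≤ j^k - (j-1)^k ≤ j^k`,
the `j`-th term is at most `C x^(k+1) / j`, and the harmonic sum up to `x` is `O(log x)`.
-/

lemma exists_forall_abs_le_mul_rpow_of_isBigO {s : ℕ → ℝ} {r : ℝ}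
    (h : (fun x : ℝ => s ⌊x⌋₊) =O[atTop] fun x => x ^ r) :
    ∃ C, ∀ m : ℕ, 1 ≤ m → |s m| ≤ C * (m : ℝ) ^ r := by
  have hsucc : (fun m : ℕ => s (m + 1)) =O[cofinite] fun m => ((m + 1 : ℕ) : ℝ) ^ r := by
    rw [Nat.cofinite_eq_atTop]
    simpa only [Function.comp_def, Nat.floor_natCast] using
      h.comp_tendsto (tendsto_natCast_atTop_atTop.comp (tendsto_add_atTop_nat 1))
  obtain ⟨C, hC⟩ := (isBigO_cofinite_iff fun m hm => absurd hm (by positivity)).1 hsucc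
  refine ⟨C, fun m hm => ?_⟩
  obtain ⟨m, rfl⟩ := Nat.exists_eq_add_of_le' hm
  simpa [abs_of_nonneg (Real.rpow_nonneg (by positivity : (0 : ℝ) ≤ m + 1) r)] using hC m

lemma sum_Icc_sub_pred_eq {M : Type*} [AddCommGroup M] (g : ℕ → M) (hg : g 0 = 0) (d : ℕ) :
    ∑ j ∈ Icc 1 d, (g j - g (j - 1)) = g d := by
  induction d with
  | zero => simp [hg]
  | succ d ih => rw [sum_Icc_succ_top (by omega), ih, Nat.add_sub_cancel, add_sub_cancel]

lemma sum_Icc_sum_Icc_div_comm {M : Type*} [AddCommMonoid M] (F : ℕ → ℕ → M) (N : ℕ) :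
    ∑ n ∈ Icc 1 N, ∑ j ∈ Icc 1 (N / n), F n j = ∑ j ∈ Icc 1 N, ∑ n ∈ Icc 1 (N / j), F n j := by
  refine sum_comm' fun n j => ?_
  simp only [mem_Icc]
  constructor
  · rintro ⟨⟨hn, -⟩, hj, hjn⟩
    rw [Nat.le_div_iff_mul_le hn] at hjn
    exact ⟨⟨hn, (Nat.le_div_iff_mul_le hj).2 (by linarith)⟩, hj, by nlinarith⟩
  · rintro ⟨⟨hn, hnj⟩, hj, -⟩
    rw [Nat.le_div_iff_mul_le hj] at hnj
    exact ⟨⟨hn, by nlinarith⟩, hj, (Nat.le_div_iff_mul_le hn).2 (by linarith)⟩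

lemma sum_mul_apply_div_eq_sum_sub_mul_sum (f g : ℕ → ℝ) (hg : g 0 = 0) (N : ℕ) :
    ∑ n ∈ Icc 1 N, f n * g (N / n)
      = ∑ j ∈ Icc 1 N, (g j - g (j - 1)) * ∑ n ∈ Icc 1 (N / j), f n := by
  rw [sum_congr rfl fun n _ => by rw [← sum_Icc_sub_pred_eq g hg (N / n), mul_sum],
    sum_Icc_sum_Icc_div_comm]
  refine sum_congr rfl fun j _ => ?_
  rw [mul_sum]
  exact sum_congr rfl fun _ _ => mul_comm _ _

lemma abs_pow_sub_pow_pred_le (j k : ℕ) :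
    |(j : ℝ) ^ k - ((j - 1 : ℕ) : ℝ) ^ k| ≤ (j : ℝ) ^ k :=
  abs_sub_le_of_nonneg_of_le (by positivity) le_rfl (by positivity)
    (pow_le_pow_left₀ (Nat.cast_nonneg _) (by exact_mod_cast Nat.sub_le j 1) k)

lemma abs_sum_mul_floor_div_pow_le {f : ℕ → ℝ} {k : ℕ} (hk : k ≠ 0) {C : ℝ}
    (hC : ∀ m : ℕ, 1 ≤ m → |∑ n ∈ Icc 1 m, f n| ≤ C * (m : ℝ) ^ (k + 1)) {x : ℝ} (hx : 0 ≤ x) :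
    |∑ n ∈ Icc 1 ⌊x⌋₊, f n * (⌊x / n⌋₊ : ℝ) ^ k| ≤ C * x ^ (k + 1) * harmonic ⌊x⌋₊ := by
  have hC0 : 0 ≤ C := by simpa using (abs_nonneg _).trans (hC 1 le_rfl)
  set N := ⌊x⌋₊
  have hterm : ∀ j ∈ Icc 1 N, |((j : ℝ) ^ k - ((j - 1 : ℕ) : ℝ) ^ k) * ∑ n ∈ Icc 1 (N / j), f n|
      ≤ C * x ^ (k + 1) * (j : ℝ)⁻¹ := by
    intro j hj
    obtain ⟨hj1, hjN⟩ := mem_Icc.1 hj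
    have hj0 : (0 : ℝ) < j := by exact_mod_cast hj1
    have hj0' : (j : ℝ) ≠ 0 := hj0.ne'
    have hdiv : ((N / j : ℕ) : ℝ) ≤ x / j :=
      Nat.cast_div_le.trans (div_le_div_of_nonneg_right (Nat.floor_le hx) hj0.le)
    calc |((j : ℝ) ^ k - ((j - 1 : ℕ) : ℝ) ^ k) * ∑ n ∈ Icc 1 (N / j), f n|
        ≤ (j : ℝ) ^ k * (C * ((N / j : ℕ) : ℝ) ^ (k + 1)) := by
          rw [abs_mul]
          exact mul_le_mul (abs_pow_sub_pow_pred_le j k)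
            (hC _ ((Nat.one_le_div_iff (by omega)).2 hjN)) (abs_nonneg _) (by positivity)
      _ ≤ (j : ℝ) ^ k * (C * (x / j) ^ (k + 1)) := by gcongr
      _ = C * x ^ (k + 1) * (j : ℝ)⁻¹ := by rw [div_pow, pow_succ (j : ℝ)]; field_simp
  simp_rw [Nat.floor_div_natCast]
  rw [sum_mul_apply_div_eq_sum_sub_mul_sum f (fun j => (j : ℝ) ^ k) (by simp [hk]),
    harmonic_eq_sum_Icc]
  push_cast
  rw [mul_sum]
  exact (abs_sum_le_sum_abs _ _).trans (sum_le_sum hterm)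

lemma isBigO_harmonic_floor_log :
    (fun x : ℝ => (harmonic ⌊x⌋₊ : ℝ)) =O[atTop] Real.log := by
  refine IsBigO.trans ?_ ((Real.isLittleO_const_log_atTop (c := 1)).isBigO.add (isBigO_refl _ _))
  refine IsBigO.of_bound 1 ?_
  filter_upwards [eventually_ge_atTop 1] with x hx
  have hH : (0 : ℝ) ≤ harmonic ⌊x⌋₊ := by rw [harmonic_eq_sum_Icc]; push_cast; positivity
  rw [one_mul, Real.norm_of_nonneg hH, Real.norm_of_nonneg (by linarith [Real.log_nonneg hx])]
  exact harmonic_floor_le_one_add_log x hx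

theorem bullet_asymp_log (f : ℕ → ℝ) (ξ : ℝ) (k : ℕ) (hk : (k : ℝ) + 1 = ξ)
    (hf : (fun x : ℝ => ∑ n ∈ Finset.Icc 1 ⌊x⌋₊, f n) =O[atTop] fun x : ℝ => x ^ ξ) :
    (fun x : ℝ => ∑ n ∈ Finset.Icc 1 ⌊x⌋₊, f n * ((⌊x / (n : ℝ)⌋₊ : ℝ)) ^ k)
      =O[atTop] fun x : ℝ => x ^ (k + 1) * Real.log x := by
  subst hk
  -- for `k = 0` the telescoping fails (`0 ^ 0 = 1`), but the sum is then `S(x)` itself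
  obtain rfl | hk := eq_or_ne k 0
  · have hlin := (isBigO_refl (fun x : ℝ => x) atTop).mul
      (Real.isLittleO_const_log_atTop (c := 1)).isBigO
    simp only [Nat.cast_zero, zero_add, Real.rpow_one] at hf
    simp only [mul_one] at hlin
    simpa using hf.trans hlin
  obtain ⟨C, hC⟩ := exists_forall_abs_le_mul_rpow_of_isBigO (s := fun m => ∑ n ∈ Icc 1 m, f n) hf
  simp_rw [← Nat.cast_add_one, Real.rpow_natCast] at hC
  refine IsBigO.trans (IsBigO.of_bound C ?_) ((isBigO_refl _ _).mul isBigO_harmonic_floor_log)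
  filter_upwards [eventually_ge_atTop 0] with x hx
  have hH : (0 : ℝ) ≤ harmonic ⌊x⌋₊ := by rw [harmonic_eq_sum_Icc]; push_cast; positivity
  rw [Real.norm_eq_abs, Real.norm_of_nonneg (by positivity), ← mul_assoc]
  exact abs_sum_mul_floor_div_pow_le hk hC hx
end

section
/- Let F be an arithmetic function and f its Möbius inverse (F = f ∗ 1, Dirichlet convolution with the constant-one function). Fix k ≥ 2. Then for all real x ≥ 1, ∑_{x₁⋯x_k ≤ x} F(gcd(x₁,…,x_k)) = ∑_{n : n^k ≤ x} f(n) T_k(x/n^k), where T_k(y) = ∑_{m ≤ y} τ_k(m). -/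
open Finset

/-!
Expanding `F (gcd v) = ∑_{d ∣ gcd v} f d` and swapping the sums, the coefficient of `f d` counts the
tuples `v` with product at most `x` all of whose entries are divisible by `d`. Writing `v = d • w`
turns these into the tuples `w` with product at most `x / d ^ k`, and sorting those by their product
`m` counts them as `T_k (x / d ^ k)`.
-/

theorem Nat.sum_divisors_eq_sum_Icc_ite {M : Type*} [AddCommMonoid M] (f : ℕ → M) {n N : ℕ}
    (hn : n ∈ Icc 1 N) : ∑ d ∈ n.divisors, f d = ∑ d ∈ Icc 1 N, if d ∣ n then f d else 0 := by
  obtain ⟨hn1, hnN⟩ := mem_Icc.mp hn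
  rw [← sum_filter]
  refine sum_congr (ext fun d => ?_) fun _ _ => rfl
  simp only [Nat.mem_divisors, mem_filter, mem_Icc]
  constructor
  · rintro ⟨hd, -⟩
    exact ⟨⟨Nat.pos_of_dvd_of_pos hd hn1, (Nat.le_of_dvd hn1 hd).trans hnN⟩, hd⟩
  · rintro ⟨-, hd⟩
    exact ⟨hd, by omega⟩

noncomputable def tuplesProdLe (ι : Type*) [Fintype ι] [DecidableEq ι] (x : ℝ) :
    Finset (ι → ℕ) :=
  (Fintype.piFinset fun _ : ι => Icc 1 ⌊x⌋₊).filter fun v => ((∏ i, v i : ℕ) : ℝ) ≤ x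

def orderedFactorizations (ι : Type*) [Fintype ι] [DecidableEq ι] (m : ℕ) : Finset (ι → ℕ) :=
  (Fintype.piFinset fun _ : ι => m.divisors).filter fun v => ∏ i, v i = m

section TupleCounting

variable {ι : Type*} [Fintype ι] [DecidableEq ι]

theorem mem_orderedFactorizations {m : ℕ} {v : ι → ℕ} :
    v ∈ orderedFactorizations ι m ↔ ∏ i, v i = m ∧ m ≠ 0 := by
  simp only [orderedFactorizations, mem_filter, Fintype.mem_piFinset, Nat.mem_divisors]
  constructor
  · rintro ⟨hdiv, rfl⟩
    refine ⟨rfl, ?_⟩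
    rw [prod_ne_zero_iff]
    intro i _ hi
    simpa [hi] using hdiv i
  · rintro ⟨rfl, hm⟩
    exact ⟨fun i => ⟨dvd_prod_of_mem v (mem_univ i), hm⟩, rfl⟩

theorem mem_tuplesProdLe {x : ℝ} {v : ι → ℕ} :
    v ∈ tuplesProdLe ι x ↔ (∀ i, 0 < v i) ∧ ((∏ i, v i : ℕ) : ℝ) ≤ x := by
  simp only [tuplesProdLe, mem_filter, Fintype.mem_piFinset, mem_Icc]
  refine ⟨fun ⟨hv, hx⟩ => ⟨fun i => (hv i).1, hx⟩, fun ⟨hv, hx⟩ => ⟨fun i => ⟨hv i, ?_⟩, hx⟩⟩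
  have hle : v i ≤ ∏ j, v j := single_le_prod' (fun j _ => hv j) (mem_univ i)
  exact Nat.le_floor ((Nat.cast_le.mpr hle).trans hx)

theorem card_tuplesProdLe (y : ℝ) :
    #(tuplesProdLe ι y) = ∑ m ∈ Icc 1 ⌊y⌋₊, #(orderedFactorizations ι m) := by
  have hprod : Set.MapsTo (fun v : ι → ℕ => ∏ i, v i) (tuplesProdLe ι y) (Icc 1 ⌊y⌋₊) := by
    intro v hv
    obtain ⟨hpos, hle⟩ := mem_tuplesProdLe.mp hv
    exact mem_Icc.mpr ⟨one_le_prod' fun i _ => hpos i, Nat.le_floor hle⟩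
  rw [card_eq_sum_card_fiberwise hprod]
  refine sum_congr rfl fun m hm => congrArg card (ext fun v => ?_)
  rw [mem_filter, mem_tuplesProdLe, mem_orderedFactorizations]
  constructor
  · rintro ⟨-, rfl⟩
    exact ⟨rfl, by have := (mem_Icc.mp hm).1; omega⟩
  · rintro ⟨rfl, hm0⟩
    refine ⟨⟨fun i => Nat.pos_of_ne_zero fun hi => hm0 ?_, ?_⟩, rfl⟩
    · exact prod_eq_zero (mem_univ i) hi
    · exact (Nat.le_floor_iff' hm0).mp (mem_Icc.mp hm).2

theorem tuplesProdLe_eq_empty {x : ℝ} (hx : x < 1) : tuplesProdLe ι x = ∅ := by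
  refine eq_empty_of_forall_notMem fun v hv => ?_
  obtain ⟨hpos, hle⟩ := mem_tuplesProdLe.mp hv
  have h1 : 1 ≤ ∏ i, v i := one_le_prod' fun i _ => hpos i
  exact (Nat.one_le_cast.mpr h1).trans hle |>.not_gt hx

theorem mul_mem_tuplesProdLe_iff {x : ℝ} {d : ℕ} (hd : 0 < d) {w : ι → ℕ} :
    (fun i => d * w i) ∈ tuplesProdLe ι x ↔ w ∈ tuplesProdLe ι (x / d ^ Fintype.card ι) := by
  have hprod : ∏ i, d * w i = d ^ Fintype.card ι * ∏ i, w i := by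
    rw [prod_mul_distrib, prod_const, card_univ]
  have hdpow : (0 : ℝ) < (d : ℝ) ^ Fintype.card ι := by positivity
  simp only [mem_tuplesProdLe, hprod, Nat.cast_mul, Nat.cast_pow, le_div_iff₀' hdpow,
    Nat.mul_pos_iff_of_pos_left hd]

theorem card_filter_dvd_tuplesProdLe (x : ℝ) {d : ℕ} (hd : 0 < d) :
    #{v ∈ tuplesProdLe ι x | ∀ i, d ∣ v i} = #(tuplesProdLe ι (x / d ^ Fintype.card ι)) := by
  refine card_nbij' (fun v i => v i / d) (fun w i => d * w i) ?_ ?_ ?_ ?_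
  · intro v hv
    obtain ⟨hv, hdvd⟩ := mem_filter.mp hv
    rw [Finset.mem_coe, ← mul_mem_tuplesProdLe_iff hd]
    simpa only [Nat.mul_div_cancel' (hdvd _)] using hv
  · intro w hw
    exact mem_filter.mpr ⟨(mul_mem_tuplesProdLe_iff hd).mpr hw, fun i => dvd_mul_right d (w i)⟩
  · intro v hv
    funext i
    exact Nat.mul_div_cancel' ((mem_filter.mp hv).2 i)
  · intro w _
    funext i
    exact Nat.mul_div_cancel_left (w i) hd

theorem gcd_mem_Icc_of_mem_tuplesProdLe [Nonempty ι] {x : ℝ} {v : ι → ℕ}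
    (hv : v ∈ tuplesProdLe ι x) : univ.gcd v ∈ Icc 1 ⌊x⌋₊ := by
  obtain i := Classical.arbitrary ι
  have hvi : v i ∈ Icc 1 ⌊x⌋₊ := by
    simp only [tuplesProdLe, mem_filter, Fintype.mem_piFinset] at hv
    exact hv.1 i
  obtain ⟨hvi1, hviN⟩ := mem_Icc.mp hvi
  have hgcd : univ.gcd v ∣ v i := gcd_dvd (mem_univ i)
  exact mem_Icc.mpr ⟨Nat.pos_of_dvd_of_pos hgcd hvi1, (Nat.le_of_dvd hvi1 hgcd).trans hviN⟩

theorem sum_tuplesProdLe_sum_divisors_gcd [Nonempty ι] {M : Type*} [AddCommMonoid M]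
    (f : ℕ → M) (x : ℝ) :
    ∑ v ∈ tuplesProdLe ι x, ∑ d ∈ (univ.gcd v).divisors, f d =
      ∑ d ∈ Icc 1 ⌊x⌋₊ with ((d : ℕ) : ℝ) ^ Fintype.card ι ≤ x,
        #(tuplesProdLe ι (x / d ^ Fintype.card ι)) • f d := by
  calc ∑ v ∈ tuplesProdLe ι x, ∑ d ∈ (univ.gcd v).divisors, f d
      = ∑ v ∈ tuplesProdLe ι x, ∑ d ∈ Icc 1 ⌊x⌋₊, if ∀ i, d ∣ v i then f d else 0 := by
        refine sum_congr rfl fun v hv => ?_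
        rw [Nat.sum_divisors_eq_sum_Icc_ite f (gcd_mem_Icc_of_mem_tuplesProdLe hv)]
        simp only [Finset.dvd_gcd_iff, mem_univ, true_implies]
    _ = ∑ d ∈ Icc 1 ⌊x⌋₊, #{v ∈ tuplesProdLe ι x | ∀ i, d ∣ v i} • f d := by
        rw [sum_comm]
        simp only [← sum_filter, sum_const]
    _ = ∑ d ∈ Icc 1 ⌊x⌋₊, #(tuplesProdLe ι (x / d ^ Fintype.card ι)) • f d :=
        sum_congr rfl fun d hd => by rw [card_filter_dvd_tuplesProdLe x (mem_Icc.mp hd).1]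
    _ = _ := by
        refine (sum_filter_of_ne fun d hd hne => ?_).symm
        by_contra hlt
        have hdpow : (0 : ℝ) < (d : ℝ) ^ Fintype.card ι := by
          have := (mem_Icc.mp hd).1
          positivity
        rw [tuplesProdLe_eq_empty ((div_lt_one hdpow).mpr (not_le.mp hlt)), card_empty,
          zero_smul] at hne
        exact hne rfl

end TupleCounting

theorem gcd_sum_via_moebius_inverse_general (k : ℕ) (hk : 2 ≤ k) (f F : ℕ → ℝ)
    (hF : ∀ n : ℕ, F n = ∑ d ∈ n.divisors, f d)
    (τk : ℕ → ℕ)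
    (hτ : ∀ m : ℕ, τk m =
      ((Fintype.piFinset fun _ : Fin k => m.divisors).filter
        (fun v : Fin k → ℕ => ∏ i, v i = m)).card)
    (T : ℝ → ℝ)
    (hT : ∀ y : ℝ, T y = ∑ m ∈ Finset.Icc 1 ⌊y⌋₊, (τk m : ℝ))
    (x : ℝ) :
    ∑ v ∈ (Fintype.piFinset fun _ : Fin k => Finset.Icc 1 ⌊x⌋₊).filter
        (fun v : Fin k → ℕ => ((∏ i, v i : ℕ) : ℝ) ≤ x),
      F (Finset.univ.gcd v)
    = ∑ n ∈ (Finset.Icc 1 ⌊x⌋₊).filter (fun n : ℕ => ((n : ℝ)) ^ k ≤ x),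
        f n * T (x / (n : ℝ) ^ k) := by
  have : Nonempty (Fin k) := ⟨⟨0, by omega⟩⟩
  have hTcard : ∀ y, T y = #(tuplesProdLe (Fin k) y) := fun y => by
    rw [hT, card_tuplesProdLe, Nat.cast_sum]
    exact sum_congr rfl fun m _ => by rw [hτ]; rfl
  simp only [hF, hTcard]
  rw [show (Fintype.piFinset fun _ : Fin k => Icc 1 ⌊x⌋₊).filter
      (fun v : Fin k → ℕ => ((∏ i, v i : ℕ) : ℝ) ≤ x) = tuplesProdLe (Fin k) x from rfl,
    sum_tuplesProdLe_sum_divisors_gcd, Fintype.card_fin]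
  simp only [nsmul_eq_mul']

theorem gcd_sum_via_moebius_inverse (k : ℕ) (hk : 2 ≤ k) (f F : ℕ → ℝ)
    (hF : ∀ n : ℕ, F n = ∑ d ∈ n.divisors, f d)
    (τk : ℕ → ℕ)
    (hτ : ∀ m : ℕ, τk m =
      ((Fintype.piFinset fun _ : Fin k => m.divisors).filter
        (fun v : Fin k → ℕ => ∏ i, v i = m)).card)
    (T : ℝ → ℝ)
    (hT : ∀ y : ℝ, T y = ∑ m ∈ Finset.Icc 1 ⌊y⌋₊, (τk m : ℝ))
    (x : ℝ) (hx : 1 ≤ x) :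
    ∑ v ∈ (Fintype.piFinset fun _ : Fin k => Finset.Icc 1 ⌊x⌋₊).filter
        (fun v : Fin k → ℕ => ((∏ i, v i : ℕ) : ℝ) ≤ x),
      F (Finset.univ.gcd v)
    = ∑ n ∈ (Finset.Icc 1 ⌊x⌋₊).filter (fun n : ℕ => ((n : ℝ)) ^ k ≤ x),
        f n * T (x / (n : ℝ) ^ k) :=
  gcd_sum_via_moebius_inverse_general k hk f F hF τk hτ T hT x
end

section
/- ∑_{ab ≤ x} τ(gcd(a,b)) = (π²/6) x log x + O(x) as x → ∞, where the sum is over ordered pairs (a,b) of positive integers with ab ≤ x. -/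
open Finset Filter Asymptotics

open Real Topology

/-!
Grouping the pairs by the common divisors `d` of `a` and `b` and writing `a = d m`, `b = d n` gives
`∑_{ab ≤ x} τ(gcd(a, b)) = ∑_{d ≤ √x} D(x / d²)`, where
`D(y) = #{(m, n) : m n ≤ y} = ∑_{m ≤ y} ⌊y / m⌋` is `y log y + O(y)` by the bounds `log y ≤ H_⌊y⌋ ≤ 1 + log y` on harmonic numbers. The main terms
add up to `x log x ∑_{d ≤ √x} d⁻² - 2 x ∑_{d ≤ √x} log d / d²`; the tail of `ζ(2) = π² / 6` beyond
`√x` is at most `1 / ⌊√x⌋`, which against `log x ≤ 2 ⌊√x⌋` costs `O(x)`, and `∑ log d / d²`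
converges.
-/

noncomputable def mulLePairs (x : ℝ) : Finset (ℕ × ℕ) :=
  ((Icc 1 ⌊x⌋₊) ×ˢ (Icc 1 ⌊x⌋₊)).filter fun p => ((p.1 * p.2 : ℕ) : ℝ) ≤ x

theorem mem_mulLePairs {x : ℝ} {p : ℕ × ℕ} :
    p ∈ mulLePairs x ↔ 0 < p.1 ∧ 0 < p.2 ∧ ((p.1 * p.2 : ℕ) : ℝ) ≤ x := by
  simp only [mulLePairs, mem_filter, mem_product, mem_Icc, Nat.one_le_iff_ne_zero,
    Nat.pos_iff_ne_zero]
  constructor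
  · rintro ⟨⟨⟨ha, -⟩, hb, -⟩, hab⟩
    exact ⟨ha, hb, hab⟩
  · rintro ⟨ha, hb, hab⟩
    refine ⟨⟨⟨ha, Nat.le_floor (le_trans ?_ hab)⟩, hb, Nat.le_floor (le_trans ?_ hab)⟩, hab⟩
    · exact_mod_cast Nat.le_mul_of_pos_right _ (Nat.pos_of_ne_zero hb)
    · exact_mod_cast Nat.le_mul_of_pos_left _ (Nat.pos_of_ne_zero ha)

theorem card_mulLePairs (y : ℝ) : #(mulLePairs y) = ∑ m ∈ Icc 1 ⌊y⌋₊, ⌊y / m⌋₊ := by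
  rw [mulLePairs, card_filter, sum_product]
  refine sum_congr rfl fun m hm => ?_
  have hm1 : (1 : ℝ) ≤ m := by exact_mod_cast (mem_Icc.1 hm).1
  have hm0 : (0 : ℝ) < m := by linarith
  have hfiber : {n ∈ Icc 1 ⌊y⌋₊ | ((m * n : ℕ) : ℝ) ≤ y} = Icc 1 ⌊y / m⌋₊ := by
    ext n
    simp only [mem_filter, mem_Icc, Nat.cast_mul]
    constructor
    · rintro ⟨⟨hn, -⟩, hmn⟩
      exact ⟨hn, Nat.le_floor ((le_div_iff₀' hm0).2 hmn)⟩
    · rintro ⟨hn, hny⟩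
      have hmn : m * n ≤ y := (le_div_iff₀' hm0).1 ((Nat.le_floor_iff' (by omega)).1 hny)
      exact ⟨⟨hn, Nat.le_floor (le_trans (le_mul_of_one_le_left n.cast_nonneg hm1) hmn)⟩, hmn⟩
  rw [← card_filter, hfiber, Nat.card_Icc, Nat.add_sub_cancel]

theorem card_filter_dvd_mulLePairs (x : ℝ) {d : ℕ} (hd : 0 < d) :
    #{p ∈ mulLePairs x | d ∣ p.1 ∧ d ∣ p.2} = #(mulLePairs (x / d ^ 2)) := by
  have hscale : ∀ m n : ℕ, ((d * m * (d * n) : ℕ) : ℝ) ≤ x ↔ ((m * n : ℕ) : ℝ) ≤ x / d ^ 2 := by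
    intro m n
    rw [le_div_iff₀' (by positivity)]
    push_cast
    ring_nf
  symm
  refine card_nbij (fun p => (d * p.1, d * p.2)) ?_ ?_ ?_
  · rintro ⟨m, n⟩ h
    simp only [coe_filter, Set.mem_ofPred_eq, mem_coe, mem_mulLePairs] at h ⊢
    exact ⟨⟨Nat.mul_pos hd h.1, Nat.mul_pos hd h.2.1, (hscale m n).2 h.2.2⟩,
      dvd_mul_right d m, dvd_mul_right d n⟩
  · rintro ⟨m, n⟩ - ⟨m', n'⟩ - h
    simp_all [Prod.ext_iff, hd.ne']
  · rintro ⟨a, b⟩ h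
    simp only [coe_filter, Set.mem_ofPred_eq, mem_mulLePairs] at h
    obtain ⟨⟨ha, hb, hab⟩, ⟨m, rfl⟩, ⟨n, rfl⟩⟩ := h
    refine ⟨(m, n), ?_, rfl⟩
    simp only [mem_coe, mem_mulLePairs]
    exact ⟨pos_of_mul_pos_right ha hd.le, pos_of_mul_pos_right hb hd.le, (hscale m n).1 hab⟩

theorem gcd_le_floor_sqrt_of_mem_mulLePairs {x : ℝ} {p : ℕ × ℕ} (hp : p ∈ mulLePairs x) :
    p.1.gcd p.2 ≤ ⌊√x⌋₊ := by
  obtain ⟨ha, hb, hab⟩ := mem_mulLePairs.1 hp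
  have hsq : (p.1.gcd p.2) ^ 2 ≤ p.1 * p.2 :=
    (sq _).trans_le <| Nat.mul_le_mul (Nat.le_of_dvd ha (Nat.gcd_dvd_left _ _))
      (Nat.le_of_dvd hb (Nat.gcd_dvd_right _ _))
  refine Nat.le_floor ((Real.le_sqrt (Nat.cast_nonneg _) (le_trans (by positivity) hab)).2 ?_)
  exact le_trans (by exact_mod_cast hsq) hab

theorem sum_card_divisors_gcd_eq_sum_card_filter_dvd {s : Finset (ℕ × ℕ)} {K : ℕ}
    (hs : ∀ p ∈ s, 0 < p.1.gcd p.2 ∧ p.1.gcd p.2 ≤ K) :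
    ∑ p ∈ s, #(p.1.gcd p.2).divisors = ∑ d ∈ Icc 1 K, #{p ∈ s | d ∣ p.1 ∧ d ∣ p.2} := by
  simp_rw [card_filter]
  rw [sum_comm]
  refine sum_congr rfl fun p hp => ?_
  rw [← card_filter]
  congr 1
  ext d
  simp only [Nat.mem_divisors, mem_filter, mem_Icc, ← Nat.dvd_gcd_iff]
  obtain ⟨hg₀, hgK⟩ := hs p hp
  constructor
  · rintro ⟨hd, -⟩
    exact ⟨⟨Nat.pos_of_dvd_of_pos hd hg₀, (Nat.le_of_dvd hg₀ hd).trans hgK⟩, hd⟩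
  · rintro ⟨-, hd⟩
    exact ⟨hd, hg₀.ne'⟩

theorem sum_card_divisors_gcd_mulLePairs (x : ℝ) :
    ∑ p ∈ mulLePairs x, #(p.1.gcd p.2).divisors
      = ∑ d ∈ Icc 1 ⌊√x⌋₊, #(mulLePairs (x / d ^ 2)) := by
  rw [sum_card_divisors_gcd_eq_sum_card_filter_dvd fun p hp =>
    ⟨Nat.gcd_pos_of_pos_left _ (mem_mulLePairs.1 hp).1, gcd_le_floor_sqrt_of_mem_mulLePairs hp⟩]
  exact sum_congr rfl fun d hd => card_filter_dvd_mulLePairs x (mem_Icc.1 hd).1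

theorem abs_card_mulLePairs_sub_mul_log_le {y : ℝ} (hy : 1 ≤ y) :
    |(#(mulLePairs y) : ℝ) - y * log y| ≤ y := by
  have hharmonic : ∑ m ∈ Icc 1 ⌊y⌋₊, y / m = y * harmonic ⌊y⌋₊ := by
    simp [harmonic_eq_sum_Icc, mul_sum, div_eq_mul_inv]
  have hcard : (#(mulLePairs y) : ℝ) = ∑ m ∈ Icc 1 ⌊y⌋₊, (⌊y / m⌋₊ : ℝ) := by
    rw [card_mulLePairs, Nat.cast_sum]
  have hupper : (#(mulLePairs y) : ℝ) ≤ y * harmonic ⌊y⌋₊ := by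
    rw [hcard, ← hharmonic]
    exact sum_le_sum fun m _ => Nat.floor_le (by positivity)
  have hlower : y * harmonic ⌊y⌋₊ - ⌊y⌋₊ ≤ (#(mulLePairs y) : ℝ) := by
    have := sum_le_sum fun m (_ : m ∈ Icc 1 ⌊y⌋₊) => (Nat.lt_floor_add_one (y / m)).le
    rw [sum_add_distrib, hharmonic] at this
    simpa [hcard] using this
  have h₁ := log_le_harmonic_floor y (by linarith)
  have h₂ := harmonic_floor_le_one_add_log y hy
  have h₃ := Nat.floor_le (by linarith : 0 ≤ y)
  rw [abs_le]
  constructor <;> nlinarith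

theorem tendsto_sum_Icc_inv_sq :
    Tendsto (fun n : ℕ => ∑ d ∈ Icc 1 n, ((d : ℝ) ^ 2)⁻¹) atTop (𝓝 (π ^ 2 / 6)) := by
  refine (hasSum_zeta_two.tendsto_sum_nat.comp (tendsto_add_atTop_nat 1)).congr fun n => ?_
  rw [Function.comp_apply, range_eq_Ico, sum_eq_sum_Ico_succ_bot n.succ_pos]
  simp [Ico_add_one_right_eq_Icc]

theorem sum_Icc_inv_sq_le (K : ℕ) : ∑ d ∈ Icc 1 K, ((d : ℝ) ^ 2)⁻¹ ≤ π ^ 2 / 6 :=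
  Monotone.ge_of_tendsto (fun _ _ h => sum_le_sum_of_subset_of_nonneg
    (Icc_subset_Icc_right h) fun _ _ _ => by positivity) tendsto_sum_Icc_inv_sq K

theorem pi_sq_div_six_sub_sum_Icc_inv_sq_le {K : ℕ} (hK : K ≠ 0) :
    π ^ 2 / 6 - ∑ d ∈ Icc 1 K, ((d : ℝ) ^ 2)⁻¹ ≤ (K : ℝ)⁻¹ := by
  have htail : ∀ᶠ n : ℕ in atTop, ∑ d ∈ Icc 1 n, ((d : ℝ) ^ 2)⁻¹
      ≤ ∑ d ∈ Icc 1 K, ((d : ℝ) ^ 2)⁻¹ + (K : ℝ)⁻¹ := by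
    filter_upwards [eventually_ge_atTop K] with n hn
    rw [← zero_add 1, Icc_add_one_left_eq_Ioc, Icc_add_one_left_eq_Ioc,
      ← sum_Ioc_consecutive _ K.zero_le hn]
    have := sum_Ioc_inv_sq_le_sub (α := ℝ) hK hn
    have : (0 : ℝ) ≤ (n : ℝ)⁻¹ := by positivity
    linarith
  linarith [le_of_tendsto tendsto_sum_Icc_inv_sq htail]

theorem summable_log_div_sq : Summable fun n : ℕ => log n / (n : ℝ) ^ 2 := by
  refine .of_nonneg_of_le (fun n => by positivity) (fun n => ?_)
    ((summable_nat_rpow.2 (by norm_num : -(3 / 2 : ℝ) < -1)).mul_left 2)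
  rcases n.eq_zero_or_pos with rfl | hn
  · simp
  have hn : (0 : ℝ) < n := by exact_mod_cast hn
  rw [div_le_iff₀ (by positivity), ← rpow_natCast, mul_assoc, ← rpow_add hn]
  calc log n ≤ (n : ℝ) ^ (1 / 2 : ℝ) / (1 / 2) := log_le_rpow_div hn.le (by norm_num)
    _ = 2 * (n : ℝ) ^ (-(3 / 2) + ((2 : ℕ) : ℝ)) := by norm_num; ring

theorem abs_sum_card_mulLePairs_sub_le {x : ℝ} {K : ℕ} (hK : (K : ℝ) ^ 2 ≤ x) :
    |∑ d ∈ Icc 1 K, ((#(mulLePairs (x / d ^ 2)) : ℝ) - x / d ^ 2 * log (x / d ^ 2))|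
      ≤ π ^ 2 / 6 * x := by
  have hx : 0 ≤ x := le_trans (by positivity) hK
  have hdx : ∀ d ∈ Icc 1 K, 1 ≤ x / (d : ℝ) ^ 2 := fun d hd => by
    obtain ⟨hd₁, hdK⟩ := mem_Icc.1 hd
    rw [one_le_div (by positivity)]
    exact le_trans (by gcongr) hK
  calc _ ≤ ∑ d ∈ Icc 1 K, x / (d : ℝ) ^ 2 := (abs_sum_le_sum_abs _ _).trans
        (sum_le_sum fun d hd => abs_card_mulLePairs_sub_mul_log_le (hdx d hd))
    _ = x * ∑ d ∈ Icc 1 K, ((d : ℝ) ^ 2)⁻¹ := by simp only [mul_sum, div_eq_mul_inv]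
    _ ≤ π ^ 2 / 6 * x := by nlinarith [sum_Icc_inv_sq_le K]

theorem sum_mul_log_div_sq {x : ℝ} (hx : x ≠ 0) (K : ℕ) :
    ∑ d ∈ Icc 1 K, x / d ^ 2 * log (x / d ^ 2)
      = x * log x * ∑ d ∈ Icc 1 K, ((d : ℝ) ^ 2)⁻¹
        - 2 * x * ∑ d ∈ Icc 1 K, log d / (d : ℝ) ^ 2 := by
  rw [mul_sum, mul_sum, ← sum_sub_distrib]
  refine sum_congr rfl fun d hd => ?_
  have hd : (d : ℝ) ≠ 0 := by exact_mod_cast (Nat.one_le_iff_ne_zero.1 (mem_Icc.1 hd).1)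
  rw [log_div hx (by positivity), log_pow]
  field_simp
  ring

theorem abs_sum_mul_log_div_sq_sub_le {x : ℝ} (hx : 1 ≤ x) {K : ℕ} (hK : K ≠ 0) :
    |∑ d ∈ Icc 1 K, x / d ^ 2 * log (x / d ^ 2) - π ^ 2 / 6 * x * log x|
      ≤ x * log x / K + 2 * (∑' n : ℕ, log n / (n : ℝ) ^ 2) * x := by
  have hP₁ := sum_Icc_inv_sq_le K
  have hP₂ := pi_sq_div_six_sub_sum_Icc_inv_sq_le hK
  have hQ₀ : 0 ≤ ∑ d ∈ Icc 1 K, log d / (d : ℝ) ^ 2 := sum_nonneg fun d _ => by positivity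
  have hQ := summable_log_div_sq.sum_le_tsum (Icc 1 K) fun n _ => by positivity
  have hxlog : 0 ≤ x * log x := mul_nonneg (by linarith) (log_nonneg hx)
  rw [sum_mul_log_div_sq (by positivity) K, abs_le, div_eq_mul_inv]
  constructor <;> nlinarith [mul_le_mul_of_nonneg_left hP₂ hxlog]

theorem log_le_two_mul_floor_sqrt {x : ℝ} (hx : 0 < x) : log x ≤ 2 * ⌊√x⌋₊ := by
  have h₁ := log_le_sub_one_of_pos (sqrt_pos.2 hx)
  have h₂ := Nat.lt_floor_add_one √x
  rw [log_sqrt hx.le] at h₁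
  linarith

theorem tau_gcd_pairs_asymp :
    (fun x : ℝ =>
        (∑ p ∈ ((Finset.Icc 1 ⌊x⌋₊) ×ˢ (Finset.Icc 1 ⌊x⌋₊)).filter
            (fun p : ℕ × ℕ => ((p.1 * p.2 : ℕ) : ℝ) ≤ x),
          ((Nat.gcd p.1 p.2).divisors.card : ℝ))
        - Real.pi ^ 2 / 6 * x * Real.log x)
      =O[atTop] fun x : ℝ => x := by
  refine .of_bound (π ^ 2 / 6 + 2 + 2 * ∑' n : ℕ, log n / (n : ℝ) ^ 2) ?_
  filter_upwards [eventually_ge_atTop 1] with x hx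
  rw [norm_of_nonneg (by linarith : (0 : ℝ) ≤ x), norm_eq_abs]
  set K := ⌊√x⌋₊
  have hK : K ≠ 0 := Nat.one_le_iff_ne_zero.1 (Nat.le_floor (by simpa using hx))
  have hKx : (K : ℝ) ^ 2 ≤ x :=
    (Real.le_sqrt (Nat.cast_nonneg K) (by linarith)).1 (Nat.floor_le (sqrt_nonneg x))
  have hsum : ∑ p ∈ mulLePairs x, (#(p.1.gcd p.2).divisors : ℝ)
      = ∑ d ∈ Icc 1 K, (#(mulLePairs (x / d ^ 2)) : ℝ) := by
    exact_mod_cast sum_card_divisors_gcd_mulLePairs x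
  have hlog : x * log x / K ≤ 2 * x := by
    rw [div_le_iff₀ (by positivity)]
    nlinarith [log_le_two_mul_floor_sqrt (by linarith : 0 < x)]
  calc |∑ p ∈ mulLePairs x, (#(p.1.gcd p.2).divisors : ℝ) - π ^ 2 / 6 * x * log x|
      = |∑ d ∈ Icc 1 K, ((#(mulLePairs (x / d ^ 2)) : ℝ) - x / d ^ 2 * log (x / d ^ 2))
          + (∑ d ∈ Icc 1 K, x / d ^ 2 * log (x / d ^ 2) - π ^ 2 / 6 * x * log x)| := by
        rw [hsum, sum_sub_distrib, sub_add_sub_cancel]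
    _ ≤ π ^ 2 / 6 * x + (x * log x / K + 2 * (∑' n : ℕ, log n / (n : ℝ) ^ 2) * x) :=
        (abs_add_le _ _).trans (add_le_add (abs_sum_card_mulLePairs_sub_le hKx)
          (abs_sum_mul_log_div_sq_sub_le hx hK))
    _ ≤ _ := by linarith
end
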